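/- Let z ≥ 1 and let p be a partition of r. Then d_com^{(z)}(p) = max { (λ_1^⊤ ∪ λ_2^⊤ ∪ ... ∪ λ_z^⊤)^⊤ : λ_1, ..., λ_z are partitions (possibly empty) with λ_1 ∪ λ_2 ∪ ... ∪ λ_z = p^⊤ }, where the maximum is taken (and attained) in the dominance order on partitions of r. -/

import Mathlib

namespace PartStmt

/-- Sorted (nonincreasing) list of parts of a partition, represented as a multiset. -/
def parts (m : Multiset ℕ) : List ℕ := (m.sort (· ≤ ·)).reverse

/-- The `i`-th part (0-indexed), with `0` beyond the length. -/
def part (m : Multiset ℕ) (i : ℕ) : ℕ := (parts m).getD i 0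

/-- Partial sum of the `k` largest parts. -/
def psum (m : Multiset ℕ) (k : ℕ) : ℕ := ∑ i ∈ Finset.range k, part m i

/-- Dominance order: every partial sum of `l` is at most that of `m`. -/
def Dom (l m : Multiset ℕ) : Prop := ∀ k, psum l k ≤ psum m k

/-- Strict dominance. -/
def StrictDom (l m : Multiset ℕ) : Prop := Dom l m ∧ l ≠ m

/-- Componentwise sum of two partitions (sorted part sequences added, zero padding). -/
def psAdd (l m : Multiset ℕ) : Multiset ℕ :=
  ((Multiset.range (Multiset.card l + Multiset.card m)).map
    (fun i => part l i + part m i)).filter (0 < ·)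

/-- The transpose (conjugate) partition: the `j`-th column length `#{x ∈ m : x ≥ j+1}`. -/
def transpose (m : Multiset ℕ) : Multiset ℕ :=
  ((Multiset.range m.sum).map
    (fun j => Multiset.card (m.filter (fun x => j + 1 ≤ x)))).filter (0 < ·)

/-- The partition `s(m; z) = (z^a, b)` where `m = a z + b`, `0 ≤ b < z`. -/
def sPart (m z : ℕ) : Multiset ℕ :=
  Multiset.replicate (m / z) z + (if m % z = 0 then 0 else {m % z})

/-- `d_com^{(z)}(p) = Σ_i s(p_i; z)` (componentwise partition sum). -/
def dcom (z : ℕ) (p : Multiset ℕ) : Multiset ℕ :=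
  (parts p).foldr (fun x acc => psAdd (sPart x z) acc) 0

/-- A multiset is a partition when all its parts are positive. -/
def IsPartition (m : Multiset ℕ) : Prop := ∀ x ∈ m, 0 < x


lemma coe_parts (m : Multiset ℕ) : (↑(parts m) : Multiset ℕ) = m := by
  show ((((m.sort (· ≤ ·)).reverse : List ℕ)) : Multiset ℕ) = m
  rw [Multiset.coe_reverse, Multiset.sort_eq]

lemma parts_length (m : Multiset ℕ) : (parts m).length = Multiset.card m := by
  simp [parts, Multiset.length_sort]

lemma parts_sorted (m : Multiset ℕ) : (parts m).Pairwise (fun a b => b ≤ a) := by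
  rw [parts, List.pairwise_reverse]
  exact Multiset.pairwise_sort (r := (· ≤ ·)) m

lemma sorted_getD_iff {L : List ℕ} (hL : L.Pairwise (fun a b => b ≤ a)) (i t : ℕ) (ht : 1 ≤ t) :
    t ≤ L.getD i 0 ↔ i < L.countP (fun x => t ≤ x) := by
  induction L generalizing i with
  | nil => simp; omega
  | cons a L ih =>
    rw [List.pairwise_cons] at hL
    obtain ⟨ha, hL⟩ := hL
    by_cases hta : t ≤ a
    · cases i with
      | zero => simp [List.countP_cons, hta]
      | succ i =>
        rw [List.getD_cons_succ, List.countP_cons, ih hL i]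
        simp [hta]
    · have h0 : L.countP (fun x => t ≤ x) = 0 := by
        rw [List.countP_eq_zero]
        intro b hb
        simp only [decide_eq_true_eq]
        exact fun h => hta (h.trans (ha b hb))
      cases i with
      | zero =>
        simp [List.countP_cons, hta, h0]
      | succ i =>
        simp only [List.getD_cons_succ, List.countP_cons, h0]
        rw [ih hL i, h0]
        simp [hta]

lemma card_filter_coe (L : List ℕ) (p : ℕ → Prop) [DecidablePred p] :
    Multiset.card ((L : Multiset ℕ).filter p) = L.countP (fun x => p x) := by
  rw [Multiset.filter_coe]
  simp [Multiset.coe_card, List.countP_eq_length_filter.symm]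

lemma part_ge_iff (m : Multiset ℕ) (i t : ℕ) (ht : 1 ≤ t) :
    t ≤ part m i ↔ i < Multiset.card (m.filter (t ≤ ·)) := by
  have h := sorted_getD_iff (parts_sorted m) i t ht
  have h2 := card_filter_coe (parts m) (t ≤ ·)
  rw [coe_parts] at h2
  rw [part, h, ← h2]

lemma part_eq_zero {m : Multiset ℕ} {i : ℕ} (h : Multiset.card m ≤ i) : part m i = 0 := by
  rw [part, List.getD_eq_default]
  rw [parts_length]; exact h

lemma part_mem (m : Multiset ℕ) (i : ℕ) : part m i = 0 ∨ part m i ∈ m := by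
  by_cases h : i < (parts m).length
  · right
    rw [part, List.getD_eq_getElem _ _ h]
    have : (parts m)[i] ∈ ((parts m : List ℕ) : Multiset ℕ) := by
      exact_mod_cast List.getElem_mem h
    rwa [coe_parts] at this
  · left; rw [part, List.getD_eq_default]; omega

lemma part_le_sum (m : Multiset ℕ) (i : ℕ) : part m i ≤ m.sum := by
  rcases part_mem m i with h | h
  · omega
  · exact Multiset.single_le_sum (fun x _ => Nat.zero_le x) _ h

lemma part_anti (m : Multiset ℕ) {i j : ℕ} (h : i ≤ j) : part m j ≤ part m i := by
  rcases Nat.eq_zero_or_pos (part m j) with h0 | h0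
  · omega
  · have := (part_ge_iff m j (part m j) h0).mp le_rfl
    exact (part_ge_iff m i (part m j) h0).mpr (by omega)



lemma downset_iff (S : Finset ℕ) (h : ∀ a b : ℕ, a ≤ b → b ∈ S → a ∈ S) (i : ℕ) :
    i ∈ S ↔ i < S.card := by
  have hex : ∃ n, n ∉ S := S.exists_notMem
  have key : ∀ j, j ∈ S ↔ j < Nat.find hex := by
    intro j
    constructor
    · intro hj
      by_contra hc
      push_neg at hc
      exact Nat.find_spec hex (h _ _ hc hj)
    · intro hj
      exact not_not.mp (Nat.find_min hex hj)
  have hS : S.card = Nat.find hex := by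
    have : S = Finset.range (Nat.find hex) := by
      ext j; rw [key, Finset.mem_range]
    have h2 := congrArg Finset.card this
    simpa using h2
  rw [key, hS]

lemma part_filter_map_range (g : ℕ → ℕ) (N : ℕ)
    (hg : ∀ i j : ℕ, i ≤ j → g j ≤ g i) (hN : ∀ i, N ≤ i → g i = 0) (i : ℕ) :
    part (((Multiset.range N).map g).filter (0 < ·)) i = g i := by
  set D := ((Multiset.range N).map g).filter (0 < ·) with hD
  have key : ∀ t, 1 ≤ t → (t ≤ part D i ↔ t ≤ g i) := by
    intro t ht
    rw [part_ge_iff D i t ht]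
    have hDf : D.filter (t ≤ ·) = ((Multiset.range N).map g).filter (t ≤ ·) := by
      rw [hD, Multiset.filter_filter]
      apply Multiset.filter_congr
      intro x _
      constructor
      · exact fun hx => hx.1
      · intro hx
        exact ⟨hx, by omega⟩
    rw [hDf]
    have hcard : Multiset.card (((Multiset.range N).map g).filter (t ≤ ·)) =
        (Finset.filter (fun j => t ≤ g j) (Finset.range N)).card := by
      rw [← Multiset.countP_eq_card_filter, Multiset.countP_map]
      simp [Finset.card_def, Finset.filter_val, Finset.range_val,
        ← Multiset.countP_eq_card_filter]
    rw [hcard]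
    rw [← downset_iff]
    · rw [Finset.mem_filter, Finset.mem_range]
      constructor
      · exact fun hx => hx.2
      · intro hx
        refine ⟨?_, hx⟩
        by_contra hc
        push_neg at hc
        have := hN i hc
        omega
    · intro a b hab hb
      rw [Finset.mem_filter, Finset.mem_range] at *
      exact ⟨by omega, le_trans hb.2 (hg a b hab)⟩
  apply le_antisymm
  · rcases Nat.eq_zero_or_pos (part D i) with h0 | h0
    · omega
    · exact (key _ h0).mp le_rfl
  · rcases Nat.eq_zero_or_pos (g i) with h0 | h0
    · omega
    · exact (key _ h0).mpr le_rfl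

lemma part_transpose (M : Multiset ℕ) (j : ℕ) :
    part (transpose M) j = Multiset.card (M.filter (fun x => j + 1 ≤ x)) := by
  rw [transpose]
  apply part_filter_map_range
  · intro a b hab
    apply Multiset.card_le_card
    apply Multiset.monotone_filter_right
    intro x hx
    omega
  · intro a ha
    rw [← Multiset.countP_eq_card_filter]
    rw [Multiset.countP_eq_zero]
    intro x hx
    have : x ≤ M.sum := Multiset.single_le_sum (fun y _ => Nat.zero_le y) _ hx
    omega



lemma sum_ind (x k : ℕ) : ∑ i ∈ Finset.range k, (if i + 1 ≤ x then 1 else 0) = min x k := by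
  induction k with
  | zero => simp
  | succ k ih =>
    rw [Finset.sum_range_succ, ih]
    split_ifs with h <;> omega

lemma card_filter_eq_sum (M : Multiset ℕ) (p : ℕ → Prop) [DecidablePred p] :
    Multiset.card (M.filter p) = (M.map (fun x => if p x then 1 else 0)).sum := by
  induction M using Multiset.induction with
  | empty => simp
  | cons a s ih => by_cases h : p a <;> simp [Multiset.filter_cons, h, ih] <;> omega

lemma sum_map_sum_range (M : Multiset ℕ) (k : ℕ) (f : ℕ → ℕ → ℕ) :
    ∑ i ∈ Finset.range k, (M.map (f i)).sum
      = (M.map (fun x => ∑ i ∈ Finset.range k, f i x)).sum := by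
  induction M using Multiset.induction with
  | empty => simp
  | cons a s ih => simp [Multiset.map_cons, Multiset.sum_cons, Finset.sum_add_distrib, ih]

lemma multiset_range_sum (n : ℕ) (f : ℕ → ℕ) :
    ((Multiset.range n).map f).sum = ∑ j ∈ Finset.range n, f j := rfl

lemma psum_transpose (M : Multiset ℕ) (k : ℕ) :
    psum (transpose M) k = (M.map (fun x => min x k)).sum := by
  unfold psum
  calc ∑ i ∈ Finset.range k, part (transpose M) i
      = ∑ i ∈ Finset.range k, (M.map (fun x => if i + 1 ≤ x then 1 else 0)).sum := by
        refine Finset.sum_congr rfl fun i _ => ?_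
        rw [part_transpose, card_filter_eq_sum]
    _ = (M.map (fun x => ∑ i ∈ Finset.range k, if i + 1 ≤ x then 1 else 0)).sum :=
        sum_map_sum_range M k _
    _ = (M.map (fun x => min x k)).sum := by
        refine congrArg _ (Multiset.map_congr rfl fun x _ => ?_)
        exact sum_ind x k

lemma map_min_transpose (lam : Multiset ℕ) (k : ℕ) :
    ((transpose lam).map (fun x => min x k)).sum = psum lam k := by
  have h1 : ∀ (s : Multiset ℕ),
      ((s.filter (0 < ·)).map (fun x => min x k)).sum = (s.map (fun x => min x k)).sum := by
    intro s
    induction s using Multiset.induction with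
    | empty => simp
    | cons a s ih =>
      rcases Nat.eq_zero_or_pos a with h | h
      · subst h; simp [Multiset.filter_cons, ih]
      · simp [Multiset.filter_cons, h, ih]
  rw [transpose, h1, Multiset.map_map]
  rw [multiset_range_sum]
  calc ∑ j ∈ Finset.range lam.sum,
        min (Multiset.card (lam.filter (fun x => j + 1 ≤ x))) k
      = ∑ j ∈ Finset.range lam.sum, ∑ i ∈ Finset.range k,
          (if i + 1 ≤ Multiset.card (lam.filter (fun x => j + 1 ≤ x)) then 1 else 0) := by
        refine Finset.sum_congr rfl fun j _ => (sum_ind _ k).symm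
    _ = ∑ i ∈ Finset.range k, ∑ j ∈ Finset.range lam.sum,
          (if i + 1 ≤ Multiset.card (lam.filter (fun x => j + 1 ≤ x)) then 1 else 0) :=
        Finset.sum_comm
    _ = ∑ i ∈ Finset.range k, ∑ j ∈ Finset.range lam.sum,
          (if j + 1 ≤ part lam i then 1 else 0) := by
        refine Finset.sum_congr rfl fun i _ => Finset.sum_congr rfl fun j _ => ?_
        congr 1
        apply propext
        rw [part_ge_iff lam i (j+1) (by omega)]
        omega
    _ = ∑ i ∈ Finset.range k, part lam i := by
        refine Finset.sum_congr rfl fun i _ => ?_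
        rw [sum_ind]
        have := part_le_sum lam i
        omega
    _ = psum lam k := rfl



lemma psum_mono_k (m : Multiset ℕ) {k k' : ℕ} (h : k ≤ k') : psum m k ≤ psum m k' := by
  unfold psum
  apply Finset.sum_le_sum_of_subset
  exact Finset.range_subset_range.mpr h

lemma getD_sum (L : List ℕ) (k : ℕ) :
    ∑ i ∈ Finset.range k, L.getD i 0 = (L.take k).sum := by
  induction L generalizing k with
  | nil => simp
  | cons a L ih =>
    cases k with
    | zero => simp
    | succ k =>
      rw [Finset.sum_range_succ']
      simp only [List.getD_cons_succ, List.getD_cons_zero, List.take_succ_cons, List.sum_cons, ih]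
      omega

lemma psum_take (m : Multiset ℕ) (k : ℕ) : psum m k = ((parts m).take k).sum := by
  unfold psum part
  exact getD_sum _ _

lemma parts_sum (m : Multiset ℕ) : (parts m).sum = m.sum := by
  conv_rhs => rw [← coe_parts m]
  simp

lemma psum_card (m : Multiset ℕ) {k : ℕ} (h : Multiset.card m ≤ k) : psum m k = m.sum := by
  rw [psum_take, List.take_of_length_le (by rw [parts_length]; exact h), parts_sum]

lemma exists_sub_psum (m : Multiset ℕ) (k : ℕ) :
    ∃ s : Multiset ℕ, s ≤ m ∧ Multiset.card s ≤ k ∧ s.sum = psum m k := by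
  refine ⟨((parts m).take k : List ℕ), ?_, ?_, ?_⟩
  · have h1 : ((parts m).take k).Subperm (parts m) := (List.take_sublist _ _).subperm
    have := (Multiset.coe_le).mpr h1
    rwa [coe_parts] at this
  · simp [List.length_take]
  · rw [psum_take]
    simp

lemma part_mono_multiset {s m : Multiset ℕ} (h : s ≤ m) (i : ℕ) : part s i ≤ part m i := by
  rcases Nat.eq_zero_or_pos (part s i) with h0 | h0
  · omega
  · apply (part_ge_iff m i (part s i) h0).mpr
    have h1 := (part_ge_iff s i (part s i) h0).mp le_rfl
    have h2 : Multiset.card (s.filter (part s i ≤ ·)) ≤ Multiset.card (m.filter (part s i ≤ ·)) :=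
      Multiset.card_le_card (Multiset.filter_le_filter _ h)
    omega

lemma sum_le_psum {s m : Multiset ℕ} (h : s ≤ m) {k : ℕ} (hk : Multiset.card s ≤ k) :
    s.sum ≤ psum m k := by
  have h1 : s.sum = psum s (Multiset.card s) := (psum_card s le_rfl).symm
  have h2 : psum s (Multiset.card s) ≤ psum s k := psum_mono_k s hk
  have h3 : psum s k ≤ psum m k := Finset.sum_le_sum fun i _ => part_mono_multiset h i
  omega

lemma psum_add_le (a b : Multiset ℕ) (k k' : ℕ) :
    psum a k + psum b k' ≤ psum (a + b) (k + k') := by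
  obtain ⟨s, hs, hsc, hss⟩ := exists_sub_psum a k
  obtain ⟨t, ht, htc, hts⟩ := exists_sub_psum b k'
  have : (s + t).sum ≤ psum (a + b) (k + k') := by
    apply sum_le_psum (add_le_add hs ht)
    rw [Multiset.card_add]; omega
  rw [Multiset.sum_add] at this
  omega

lemma part_psAdd (a b : Multiset ℕ) (i : ℕ) : part (psAdd a b) i = part a i + part b i := by
  rw [psAdd]
  apply part_filter_map_range
  · intro x y hxy
    have := part_anti a hxy
    have := part_anti b hxy
    omega
  · intro x hx
    rw [part_eq_zero (by omega), part_eq_zero (by omega)]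

lemma psum_psAdd (a b : Multiset ℕ) (k : ℕ) :
    psum (psAdd a b) k = psum a k + psum b k := by
  unfold psum
  rw [← Finset.sum_add_distrib]
  exact Finset.sum_congr rfl fun i _ => part_psAdd a b i



lemma sPart_eq (x z : ℕ) (hz : 1 ≤ z) :
    sPart x z = ((Multiset.range (x / z + 1)).map (fun i => min z (x - i * z))).filter (0 < ·) := by
  have hdm : z * (x / z) + x % z = x := Nat.div_add_mod x z
  have hlt : x % z < z := Nat.mod_lt x (by omega)
  rw [Multiset.range_succ, Multiset.map_cons]
  have h1 : min z (x - x / z * z) = x % z := by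
    have : x / z * z = z * (x / z) := mul_comm _ _
    omega
  have h2 : (Multiset.range (x / z)).map (fun i => min z (x - i * z)) =
      Multiset.replicate (x / z) z := by
    rw [show Multiset.replicate (x / z) z =
        (Multiset.range (x / z)).map (fun _ => z) by
      rw [Multiset.map_const', Multiset.card_range]]
    apply Multiset.map_congr rfl
    intro i hi
    rw [Multiset.mem_range] at hi
    have h3 : (i + 1) * z ≤ x / z * z := Nat.mul_le_mul_right z (by omega)
    have h4 : x / z * z ≤ x := Nat.div_mul_le_self x z
    have h5 : (i + 1) * z = i * z + z := by ring
    omega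
  rw [h1, h2, Multiset.filter_cons, Multiset.filter_eq_self.mpr ?_]
  · rw [sPart]
    rcases Nat.eq_zero_or_pos (x % z) with h | h
    · simp [h]
    · rw [if_neg (by omega), if_pos h, add_comm]
  · intro y hy
    rw [Multiset.eq_of_mem_replicate hy]
    omega

lemma part_sPart (x z : ℕ) (hz : 1 ≤ z) (i : ℕ) :
    part (sPart x z) i = min z (x - i * z) := by
  rw [sPart_eq x z hz]
  apply part_filter_map_range
  · intro a b hab
    have : a * z ≤ b * z := Nat.mul_le_mul_right z hab
    omega
  · intro a ha
    have hdm : z * (x / z) + x % z = x := Nat.div_add_mod x z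
    have hlt : x % z < z := Nat.mod_lt x (by omega)
    have h3 : (x / z + 1) * z ≤ a * z := Nat.mul_le_mul_right z ha
    have h5 : (x / z + 1) * z = x / z * z + z := by ring
    have : x / z * z = z * (x / z) := mul_comm _ _
    omega

lemma psum_sPart (x z : ℕ) (hz : 1 ≤ z) (k : ℕ) :
    psum (sPart x z) k = min x (k * z) := by
  unfold psum
  have hp : ∀ i, part (sPart x z) i = min z (x - i * z) := part_sPart x z hz
  induction k with
  | zero => simp
  | succ k ih =>
    rw [Finset.sum_range_succ, ih, hp, Nat.succ_mul]
    omega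

lemma psum_zero (k : ℕ) : psum 0 k = 0 := by
  unfold psum
  have : ∀ i, part 0 i = 0 := fun i => part_eq_zero (by simp)
  simp [this]

lemma map_sum_parts (p : Multiset ℕ) (f : ℕ → ℕ) :
    ((parts p).map f).sum = (Multiset.map f p).sum := by
  conv_rhs => rw [← coe_parts p]
  simp

lemma psum_dcom (z : ℕ) (hz : 1 ≤ z) (p : Multiset ℕ) (k : ℕ) :
    psum (dcom z p) k = (p.map (fun x => min x (k * z))).sum := by
  rw [dcom, ← map_sum_parts]
  induction parts p with
  | nil => simp [psum_zero]
  | cons a L ih =>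
    rw [List.foldr_cons, psum_psAdd, psum_sPart _ _ hz, List.map_cons, List.sum_cons, ih]



lemma part_pos_iff {m : Multiset ℕ} (hm : IsPartition m) (i : ℕ) :
    0 < part m i ↔ i < Multiset.card m := by
  constructor
  · intro h
    by_contra hc
    push_neg at hc
    rw [part_eq_zero hc] at h
    omega
  · intro h
    have hl : i < (parts m).length := by rw [parts_length]; exact h
    rw [part, List.getD_eq_getElem _ _ hl]
    apply hm
    have : (parts m)[i] ∈ ((parts m : List ℕ) : Multiset ℕ) := by
      exact_mod_cast List.getElem_mem hl
    rwa [coe_parts] at this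

lemma eq_of_part_eq {l m : Multiset ℕ} (hl : IsPartition l) (hm : IsPartition m)
    (h : ∀ i, part l i = part m i) : l = m := by
  have hcard : Multiset.card l = Multiset.card m := by
    by_contra hc
    rcases Nat.lt_or_ge (Multiset.card l) (Multiset.card m) with h1 | h1
    · have h2 := (part_pos_iff hm (Multiset.card l)).mpr h1
      rw [← h] at h2
      rw [part_eq_zero le_rfl] at h2
      omega
    · have h1' : Multiset.card m < Multiset.card l := by omega
      have h2 := (part_pos_iff hl (Multiset.card m)).mpr h1'
      rw [h] at h2
      rw [part_eq_zero le_rfl] at h2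
      omega
  have hpts : parts l = parts m := by
    apply List.ext_getElem
    · rw [parts_length, parts_length, hcard]
    · intro i h1 h2
      have h3 := h i
      rwa [part, part, List.getD_eq_getElem _ _ h1, List.getD_eq_getElem _ _ h2] at h3
  calc l = ↑(parts l) := (coe_parts l).symm
    _ = ↑(parts m) := by rw [hpts]
    _ = m := coe_parts m

lemma eq_of_psum_eq {l m : Multiset ℕ} (hl : IsPartition l) (hm : IsPartition m)
    (h : ∀ k, psum l k = psum m k) : l = m := by
  apply eq_of_part_eq hl hm
  intro i
  have h1 := h i
  have h2 := h (i + 1)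
  rw [psum, psum, Finset.sum_range_succ, Finset.sum_range_succ] at h2
  rw [psum, psum] at h1
  omega

lemma isPartition_filter (s : Multiset ℕ) : IsPartition (s.filter (0 < ·)) :=
  fun x hx => (Multiset.mem_filter.mp hx).2

lemma isPartition_transpose (m : Multiset ℕ) : IsPartition (transpose m) := by
  rw [transpose]; exact isPartition_filter _

lemma isPartition_psAdd (a b : Multiset ℕ) : IsPartition (psAdd a b) := by
  rw [psAdd]; exact isPartition_filter _

lemma isPartition_dcom (z : ℕ) (p : Multiset ℕ) : IsPartition (dcom z p) := by
  rw [dcom]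
  induction parts p with
  | nil => intro x hx; simp at hx
  | cons a L ih => exact isPartition_psAdd _ _

lemma map_sum_finset {ι : Type*} (s : Finset ι) (g : ι → Multiset ℕ) (f : ℕ → ℕ) :
    (Multiset.map f (∑ i ∈ s, g i)).sum = ∑ i ∈ s, (Multiset.map f (g i)).sum := by
  classical
  induction s using Finset.induction_on with
  | empty => simp
  | @insert _ _ h ih =>
    rw [Finset.sum_insert h, Finset.sum_insert h, Multiset.map_add, Multiset.sum_add, ih]

lemma psum_transpose_sum {z : ℕ} (lam : Fin z → Multiset ℕ) (k : ℕ) :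
    psum (transpose (∑ i, transpose (lam i))) k = ∑ i, psum (lam i) k := by
  rw [psum_transpose, map_sum_finset]
  exact Finset.sum_congr rfl fun i _ => map_min_transpose (lam i) k

lemma sum_psum_le {ι : Type*} (s : Finset ι) (f : ι → Multiset ℕ) (k : ℕ) :
    ∑ i ∈ s, psum (f i) k ≤ psum (∑ i ∈ s, f i) (s.card * k) := by
  classical
  induction s using Finset.induction_on with
  | empty => simp
  | @insert a s h ih =>
    rw [Finset.sum_insert h, Finset.sum_insert h, Finset.card_insert_of_notMem h]
    have h1 : psum (f a) k + ∑ i ∈ s, psum (f i) k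
        ≤ psum (f a) k + psum (∑ i ∈ s, f i) (s.card * k) := by omega
    refine h1.trans ((psum_add_le _ _ _ _).trans ?_)
    apply psum_mono_k
    ring_nf
    omega

lemma dom_side (z : ℕ) (hz : 1 ≤ z) (p : Multiset ℕ) (lam : Fin z → Multiset ℕ)
    (hsum : (∑ i, lam i) = transpose p) :
    Dom (transpose (∑ i, transpose (lam i))) (dcom z p) := by
  intro k
  rw [psum_transpose_sum, psum_dcom z hz p k]
  have h1 : ∑ i, psum (lam i) k ≤ psum (∑ i, lam i) (Finset.univ.card * k) :=
    sum_psum_le _ _ _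
  rw [hsum, Finset.card_univ, Fintype.card_fin] at h1
  have h2 : psum (transpose p) (z * k) = (p.map (fun x => min x (z * k))).sum :=
    psum_transpose p (z * k)
  rw [mul_comm k z]
  exact h1.trans (le_of_eq h2)



/-- column count -/
def colcount (p : Multiset ℕ) (j : ℕ) : ℕ := Multiset.card (p.filter (fun x => j + 1 ≤ x))

lemma colcount_anti (p : Multiset ℕ) {a b : ℕ} (h : a ≤ b) : colcount p b ≤ colcount p a := by
  apply Multiset.card_le_card
  apply Multiset.monotone_filter_right
  intro x hx
  omega

lemma colcount_eq_zero (p : Multiset ℕ) {j : ℕ} (h : p.sum ≤ j) : colcount p j = 0 := by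
  rw [colcount, ← Multiset.countP_eq_card_filter, Multiset.countP_eq_zero]
  intro x hx
  have : x ≤ p.sum := Multiset.single_le_sum (fun y _ => Nat.zero_le y) _ hx
  omega

lemma psum_transpose_eq_sum_colcount (p : Multiset ℕ) (k : ℕ) :
    psum (transpose p) k = ∑ j ∈ Finset.range k, colcount p j := by
  unfold psum
  exact Finset.sum_congr rfl fun j _ => part_transpose p j

/-- round robin pieces -/
def lamRR (z : ℕ) (p : Multiset ℕ) (i : ℕ) : Multiset ℕ :=
  ((Multiset.range p.sum).map (fun m => colcount p (m * z + i))).filter (0 < ·)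

lemma isPartition_lamRR (z : ℕ) (p : Multiset ℕ) (i : ℕ) : IsPartition (lamRR z p i) :=
  isPartition_filter _

lemma part_lamRR (z : ℕ) (hz : 1 ≤ z) (p : Multiset ℕ) (i : ℕ) (hi : i < z) (m : ℕ) :
    part (lamRR z p i) m = colcount p (m * z + i) := by
  rw [lamRR]
  apply part_filter_map_range
  · intro a b hab
    apply colcount_anti
    have : a * z ≤ b * z := Nat.mul_le_mul_right z hab
    omega
  · intro a ha
    apply colcount_eq_zero
    have : a ≤ a * z := Nat.le_mul_of_pos_right a (by omega)
    omega

lemma psum_lamRR (z : ℕ) (hz : 1 ≤ z) (p : Multiset ℕ) (i : ℕ) (hi : i < z) (k : ℕ) :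
    psum (lamRR z p i) k = ∑ m ∈ Finset.range k, colcount p (m * z + i) := by
  unfold psum
  exact Finset.sum_congr rfl fun m _ => part_lamRR z hz p i hi m

lemma sum_singleton_map (n : ℕ) (f : ℕ → ℕ) :
    ∑ i ∈ Finset.range n, ({f i} : Multiset ℕ) = (Multiset.range n).map f := by
  induction n with
  | zero => simp
  | succ n ih =>
    rw [Finset.sum_range_succ, Multiset.range_succ, Multiset.map_cons, ih,
      ← Multiset.singleton_add, add_comm]



lemma filter_sum_multiset {ι : Type*} (s : Finset ι) (f : ι → Multiset ℕ)
    (p : ℕ → Prop) [DecidablePred p] :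
    (∑ i ∈ s, f i).filter p = ∑ i ∈ s, (f i).filter p := by
  classical
  induction s using Finset.induction_on with
  | empty => simp
  | @insert a s h ih => rw [Finset.sum_insert h, Finset.sum_insert h, Multiset.filter_add, ih]

lemma range_mul_map (c : ℕ → ℕ) (z N : ℕ) : (Multiset.range (N * z)).map c
    = ∑ i ∈ Finset.range z, (Multiset.range N).map (fun m => c (m * z + i)) := by
  induction N with
  | zero => simp
  | succ N ih =>
    have h1 : (N + 1) * z = N * z + z := by ring
    rw [h1, Multiset.range_add, Multiset.map_add, Multiset.map_map, ih]
    have h2 : ∀ i ∈ Finset.range z, (Multiset.range (N + 1)).map (fun m => c (m * z + i))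
        = (Multiset.range N).map (fun m => c (m * z + i)) + {c (N * z + i)} := by
      intro i _
      rw [Multiset.range_succ, Multiset.map_cons, ← Multiset.singleton_add, add_comm]
    rw [Finset.sum_congr rfl h2, Finset.sum_add_distrib, sum_singleton_map]
    rfl

lemma sum_range_mul (f : ℕ → ℕ) (z k : ℕ) :
    ∑ s ∈ Finset.range (k * z), f s
      = ∑ m ∈ Finset.range k, ∑ i ∈ Finset.range z, f (m * z + i) := by
  induction k with
  | zero => simp
  | succ k ih =>
    have h1 : (k + 1) * z = k * z + z := by ring
    rw [h1, Finset.sum_range_add, ih, Finset.sum_range_succ]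

lemma sum_lamRR (z : ℕ) (hz : 1 ≤ z) (p : Multiset ℕ) :
    ∑ i : Fin z, lamRR z p i.1 = transpose p := by
  rw [Fin.sum_univ_eq_sum_range (fun i => lamRR z p i)]
  unfold lamRR
  rw [← filter_sum_multiset, ← range_mul_map]
  have h2 : p.sum * z = p.sum + (p.sum * z - p.sum) := by
    have : p.sum ≤ p.sum * z := Nat.le_mul_of_pos_right _ (by omega)
    omega
  rw [h2, Multiset.range_add, Multiset.map_add, Multiset.filter_add]
  have h3 : (((Multiset.range (p.sum * z - p.sum)).map (p.sum + ·)).map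
      (colcount p)).filter (0 < ·) = 0 := by
    rw [Multiset.filter_eq_nil]
    intro a ha
    rw [Multiset.mem_map] at ha
    obtain ⟨b, hb, rfl⟩ := ha
    rw [Multiset.mem_map] at hb
    obtain ⟨x, hx, rfl⟩ := hb
    rw [colcount_eq_zero p (by omega)]
    omega
  rw [h3, add_zero, transpose]
  rfl

lemma psum_RR (z : ℕ) (hz : 1 ≤ z) (p : Multiset ℕ) (k : ℕ) :
    psum (transpose (∑ i : Fin z, transpose (lamRR z p i.1))) k = psum (dcom z p) k := by
  rw [psum_transpose_sum, psum_dcom z hz p k]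
  rw [Fin.sum_univ_eq_sum_range (fun i => psum (lamRR z p i) k)]
  calc ∑ i ∈ Finset.range z, psum (lamRR z p i) k
      = ∑ i ∈ Finset.range z, ∑ m ∈ Finset.range k, colcount p (m * z + i) :=
        Finset.sum_congr rfl fun i hi =>
          psum_lamRR z hz p i (Finset.mem_range.mp hi) k
    _ = ∑ m ∈ Finset.range k, ∑ i ∈ Finset.range z, colcount p (m * z + i) :=
        Finset.sum_comm
    _ = ∑ s ∈ Finset.range (k * z), colcount p s := (sum_range_mul _ _ _).symm
    _ = psum (transpose p) (k * z) := (psum_transpose_eq_sum_colcount p (k * z)).symm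
    _ = (p.map (fun x => min x (k * z))).sum := psum_transpose p (k * z)


/-- `d_com^{(z)}(p)` is the attained dominance-maximum of
`(λ_1^⊤ ∪ ... ∪ λ_z^⊤)^⊤` over all decompositions `λ_1 ∪ ... ∪ λ_z = p^⊤`. -/
theorem stmt5 (z r : ℕ) (hz : 1 ≤ z) (p : Multiset ℕ) (hp : IsPartition p)
    (hr : p.sum = r) :
    (∃ lam : Fin z → Multiset ℕ, (∀ i, IsPartition (lam i)) ∧
        (∑ i, lam i) = transpose p ∧
        transpose (∑ i, transpose (lam i)) = dcom z p) ∧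
    (∀ lam : Fin z → Multiset ℕ, (∀ i, IsPartition (lam i)) →
        (∑ i, lam i) = transpose p →
        Dom (transpose (∑ i, transpose (lam i))) (dcom z p)) := by
  constructor
  · refine ⟨fun i => lamRR z p i.1, fun i => isPartition_lamRR z p i.1, sum_lamRR z hz p, ?_⟩
    exact eq_of_psum_eq (isPartition_transpose _) (isPartition_dcom _ _) (psum_RR z hz p)
  · intro lam _ hsum
    exact dom_side z hz p lam hsum

end PartStmt
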